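/- Let δ₀ > 0, C > 0, c > 0 and m ≥ 1. Then there is no sequence of functions (f_k)_{k≥1}, where each f_k is defined on the polydisc D_k = {w ∈ ℂ^m : |w_i| < δ₀·k for all i}, is positive, bounded, twice continuously differentiable, and satisfies both Δ(log f_k) ≥ C·f_k pointwise on D_k and f_k(0) = c. -/

import Mathlib

/-- The Euclidean Laplacian of a function `g : ℂ^m → ℝ`, where `ℂ^m` is identified with
`ℝ^{2m}`: the sum, over the `2m` real coordinate directions `e_i` and `i·e_i`, of the second
directional derivatives. -/
noncomputable def lap {m : ℕ} (g : (Fin m → ℂ) → ℝ) (w : Fin m → ℂ) : ℝ :=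
  ∑ i : Fin m,
    (fderiv ℝ (fun v => fderiv ℝ g v (Pi.single i 1)) w (Pi.single i 1)
      + fderiv ℝ (fun v => fderiv ℝ g v (Pi.single i Complex.I)) w (Pi.single i Complex.I))

theorem deriv2_nonpos_of_isLocalMax {h : ℝ → ℝ} (hh : ContDiffAt ℝ 2 h 0)
    (hmax : IsLocalMax h 0) : deriv (deriv h) 0 ≤ 0 := by
  by_contra hL
  push_neg at hL
  have h1 : deriv h 0 = 0 := hmax.deriv_eq_zero
  obtain ⟨u, hu_mem, hu⟩ := hh.contDiffOn (le_refl 2) (by norm_num)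
  set t : Set ℝ := interior u with ht
  have ht_open : IsOpen t := isOpen_interior
  have ht0 : (0:ℝ) ∈ t := mem_interior_iff_mem_nhds.2 hu_mem
  have hht : ContDiffOn ℝ 2 h t := hu.mono interior_subset
  have hD1 : ContDiffOn ℝ 1 (deriv h) t := hht.deriv_of_isOpen ht_open (by norm_num)
  have hdiff : DifferentiableAt ℝ (deriv h) 0 :=
    ((hD1.differentiableOn (by norm_num)).differentiableAt (ht_open.mem_nhds ht0))
  have hDA : HasDerivAt (deriv h) (deriv (deriv h) 0) 0 := hdiff.hasDerivAt
  have hslope := hasDerivAt_iff_tendsto_slope.1 hDA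
  have hpos : ∀ᶠ s in nhdsWithin (0:ℝ) (Set.Ioi 0), 0 < deriv h s := by
    have h2 : ∀ᶠ s in nhdsWithin (0:ℝ) {(0:ℝ)}ᶜ, 0 < slope (deriv h) 0 s :=
      hslope.eventually (eventually_gt_nhds hL)
    have h3 : ∀ᶠ s in nhdsWithin (0:ℝ) (Set.Ioi 0), 0 < slope (deriv h) 0 s :=
      h2.filter_mono (nhdsWithin_mono 0 (fun s hs => ne_of_gt hs))
    filter_upwards [h3, self_mem_nhdsWithin] with s hs hs0
    have heq : slope (deriv h) 0 s = deriv h s / s := by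
      simp [slope_def_field, h1]
    rw [heq] at hs
    have hs0' : (0:ℝ) < s := hs0
    have := mul_pos hs hs0'
    rwa [div_mul_cancel₀ _ (ne_of_gt hs0')] at this
  obtain ⟨ε₁, hε₁pos, hIoc⟩ := (mem_nhdsGT_iff_exists_Ioc_subset).1 hpos
  have hQ : {s : ℝ | h s ≤ h 0} ∩ t ∈ nhds (0:ℝ) :=
    Filter.inter_mem hmax (ht_open.mem_nhds ht0)
  obtain ⟨δ, hδpos, hball⟩ := Metric.mem_nhds_iff.1 hQ
  set ε := min ε₁ (δ/2) with hε
  have hεpos : 0 < ε := lt_min hε₁pos (by linarith)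
  have hIcc_sub : Set.Icc (0:ℝ) ε ⊆ Metric.ball 0 δ := by
    intro s hs
    rw [Real.ball_eq_Ioo]
    constructor
    · linarith [hs.1]
    · have := hs.2
      have h2 : ε ≤ δ/2 := min_le_right _ _
      simp only [zero_add, zero_sub]
      linarith
  have hIcc_t : Set.Icc (0:ℝ) ε ⊆ {s : ℝ | h s ≤ h 0} ∩ t := fun s hs => hball (hIcc_sub hs)
  have hcont : ContinuousOn h (Set.Icc 0 ε) :=
    hht.continuousOn.mono (fun s hs => (hIcc_t hs).2)
  have hderiv_pos : ∀ s ∈ interior (Set.Icc (0:ℝ) ε), 0 < deriv h s := by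
    intro s hs
    rw [interior_Icc] at hs
    exact hIoc ⟨hs.1, le_trans (le_of_lt hs.2) (min_le_left _ _)⟩
  have hmono : StrictMonoOn h (Set.Icc 0 ε) :=
    strictMonoOn_of_deriv_pos (convex_Icc 0 ε) hcont hderiv_pos
  have h0mem : (0:ℝ) ∈ Set.Icc (0:ℝ) ε := Set.left_mem_Icc.2 (le_of_lt hεpos)
  have hεmem : ε ∈ Set.Icc (0:ℝ) ε := Set.right_mem_Icc.2 (le_of_lt hεpos)
  have := hmono h0mem hεmem hεpos
  have hle : h ε ≤ h 0 := (hIcc_t hεmem).1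
  linarith


theorem bridge {E : Type*} [NormedAddCommGroup E] [NormedSpace ℝ E]
    (g : E → ℝ) (w e : E) (hg : ContDiffAt ℝ 2 g w) :
    fderiv ℝ (fun v => fderiv ℝ g v e) w e = deriv (deriv (fun t : ℝ => g (w + t • e))) 0 := by
  obtain ⟨u, hu_mem, hu⟩ := hg.contDiffOn (le_refl 2) (by norm_num)
  set t : Set E := interior u with ht
  have ht_open : IsOpen t := isOpen_interior
  have ht0 : w ∈ t := mem_interior_iff_mem_nhds.2 hu_mem
  have hgt : ContDiffOn ℝ 2 g t := hu.mono interior_subset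
  set ℓ : ℝ → E := fun s => w + s • e with hℓdef
  have hℓ : ∀ s : ℝ, HasDerivAt ℓ e s := fun s => by
    rw [hℓdef]; simpa using ((hasDerivAt_id s).smul_const e).const_add w
  have hℓ0 : ℓ 0 = w := by simp [hℓdef]
  have hℓcont : Continuous ℓ := by fun_prop
  set c : (E →L[ℝ] ℝ) →L[ℝ] ℝ := ContinuousLinearMap.apply ℝ ℝ e with hc
  have hdf : DifferentiableAt ℝ (fderiv ℝ g) w :=
    (hg.fderiv_right (m := 1) (by norm_num)).differentiableAt (by norm_num)
  set Φ : E →L[ℝ] ℝ := c.comp (fderiv ℝ (fderiv ℝ g) w) with hΦ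
  have hFw : HasFDerivAt (fun v => fderiv ℝ g v e) Φ w :=
    c.hasFDerivAt.comp w hdf.hasFDerivAt
  have key1 : deriv (fun s : ℝ => fderiv ℝ g (ℓ s) e) 0 = Φ e := by
    have := (hℓ0 ▸ hFw).comp_hasDerivAt 0 (hℓ 0)
    exact this.deriv
  have key2 : deriv (fun s : ℝ => g (ℓ s)) =ᶠ[nhds (0:ℝ)]
      fun s : ℝ => fderiv ℝ g (ℓ s) e := by
    have hmem : ℓ ⁻¹' t ∈ nhds (0:ℝ) :=
      hℓcont.continuousAt.preimage_mem_nhds (ht_open.mem_nhds (hℓ0 ▸ ht0))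
    filter_upwards [hmem] with s hs
    have hgd : DifferentiableAt ℝ g (ℓ s) :=
      (hgt.differentiableOn (by norm_num)).differentiableAt (ht_open.mem_nhds hs)
    exact (hgd.hasFDerivAt.comp_hasDerivAt s (hℓ s)).deriv
  calc fderiv ℝ (fun v => fderiv ℝ g v e) w e = Φ e := by rw [hFw.fderiv]
    _ = deriv (fun s : ℝ => fderiv ℝ g (ℓ s) e) 0 := key1.symm
    _ = deriv (deriv (fun s : ℝ => g (ℓ s))) 0 := (key2.deriv_eq).symm


theorem deriv2_add_of_contDiffAt {p q : ℝ → ℝ} (hp : ContDiffAt ℝ 2 p 0) (hq : ContDiffAt ℝ 2 q 0) :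
    deriv (deriv (fun s => p s + q s)) 0 = deriv (deriv p) 0 + deriv (deriv q) 0 := by
  obtain ⟨up, hup_mem, hup⟩ := hp.contDiffOn (le_refl 2) (by norm_num)
  obtain ⟨uq, huq_mem, huq⟩ := hq.contDiffOn (le_refl 2) (by norm_num)
  set t : Set ℝ := interior up ∩ interior uq with ht
  have ht_open : IsOpen t := isOpen_interior.inter isOpen_interior
  have ht0 : (0:ℝ) ∈ t :=
    ⟨mem_interior_iff_mem_nhds.2 hup_mem, mem_interior_iff_mem_nhds.2 huq_mem⟩
  have hpt : ContDiffOn ℝ 2 p t := (hup.mono interior_subset).mono Set.inter_subset_left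
  have hqt : ContDiffOn ℝ 2 q t := (huq.mono interior_subset).mono Set.inter_subset_right
  have hdp : ∀ s ∈ t, DifferentiableAt ℝ p s := fun s hs =>
    (hpt.differentiableOn (by norm_num)).differentiableAt (ht_open.mem_nhds hs)
  have hdq : ∀ s ∈ t, DifferentiableAt ℝ q s := fun s hs =>
    (hqt.differentiableOn (by norm_num)).differentiableAt (ht_open.mem_nhds hs)
  have hev : deriv (fun s => p s + q s) =ᶠ[nhds (0:ℝ)] fun s => deriv p s + deriv q s := by
    filter_upwards [ht_open.mem_nhds ht0] with s hs
    exact deriv_add (hdp s hs) (hdq s hs)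
  rw [hev.deriv_eq]
  have hdp2 : DifferentiableAt ℝ (deriv p) 0 :=
    (((hpt.deriv_of_isOpen (m := 1) ht_open (by norm_num)).differentiableOn
      (by norm_num)).differentiableAt (ht_open.mem_nhds ht0))
  have hdq2 : DifferentiableAt ℝ (deriv q) 0 :=
    (((hqt.deriv_of_isOpen (m := 1) ht_open (by norm_num)).differentiableOn
      (by norm_num)).differentiableAt (ht_open.mem_nhds ht0))
  exact deriv_add hdp2 hdq2

theorem deriv2_log_formula (R x b : ℝ) (hφ : 0 < R^2 - (x^2 + b^2)) :
    deriv (deriv (fun s : ℝ => -2 * Real.log (R^2 - ((x + s)^2 + b^2)))) 0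
      = 4/(R^2 - (x^2 + b^2)) + 8*x^2/(R^2 - (x^2 + b^2))^2 := by
  set φ : ℝ → ℝ := fun s => R^2 - ((x + s)^2 + b^2) with hφdef
  have hφcont : Continuous φ := by fun_prop
  have hφ0 : 0 < φ 0 := by simp only [hφdef]; nlinarith
  have hmem : {s : ℝ | 0 < φ s} ∈ nhds (0:ℝ) :=
    (isOpen_lt continuous_const hφcont).mem_nhds hφ0
  have hφ' : ∀ s : ℝ, HasDerivAt φ (-(2*(x+s))) s := by
    intro s
    have h1 : HasDerivAt (fun s : ℝ => x + s) 1 s := (hasDerivAt_id s).const_add x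
    have h2 : HasDerivAt (fun s : ℝ => (x + s)^2 + b^2) (2*(x+s)) s := by
      simpa using ((h1.pow 2).add_const (b^2))
    simpa using h2.const_sub (R^2)
  have hev : deriv (fun s : ℝ => -2 * Real.log (R^2 - ((x + s)^2 + b^2)))
      =ᶠ[nhds (0:ℝ)] fun s => 4*(x+s)/φ s := by
    filter_upwards [hmem] with s hs
    have hlog : HasDerivAt (fun s => Real.log (φ s)) ((φ s)⁻¹ * -(2*(x+s))) s :=
      (Real.hasDerivAt_log (ne_of_gt hs)).comp s (hφ' s)
    have := (hlog.const_mul (-2)).deriv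
    rw [show (fun s : ℝ => -2 * Real.log (R^2 - ((x + s)^2 + b^2)))
        = fun s => -2 * Real.log (φ s) from rfl, this]
    field_simp
    ring
  rw [hev.deriv_eq]
  have h4 : HasDerivAt (fun s : ℝ => 4*(x+s)) 4 0 := by
    simpa using ((hasDerivAt_id (0:ℝ)).const_add x).const_mul 4
  have hdiv : HasDerivAt (fun s => 4*(x+s)/φ s)
      ((4 * φ 0 - (4*(x+0)) * (-(2*(x+0))))/(φ 0)^2) 0 := h4.div (hφ' 0) (ne_of_gt hφ0)
  rw [hdiv.deriv]
  have : φ 0 = R^2 - (x^2 + b^2) := by simp [hφdef]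
  rw [this]
  field_simp
  ring


theorem contDiff_normSq : ContDiff ℝ 2 Complex.normSq := by
  have : Complex.normSq = fun z : ℂ => z.re * z.re + z.im * z.im := by
    funext z; exact Complex.normSq_apply z
  rw [this]
  exact (Complex.reCLM.contDiff.mul Complex.reCLM.contDiff).add
    (Complex.imCLM.contDiff.mul Complex.imCLM.contDiff)

set_option maxHeartbeats 1000000 in
theorem key (R C M : ℝ) (hR : 0 < R) (hC : 0 < C) (m : ℕ) (hm : 1 ≤ m)
    (f : (Fin m → ℂ) → ℝ)
    (hpos : ∀ w ∈ {w : Fin m → ℂ | ∀ i, ‖w i‖ < R}, 0 < f w)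
    (hM : ∀ w ∈ {w : Fin m → ℂ | ∀ i, ‖w i‖ < R}, f w ≤ M)
    (hf : ContDiffOn ℝ 2 f {w : Fin m → ℂ | ∀ i, ‖w i‖ < R})
    (hlap : ∀ w ∈ {w : Fin m → ℂ | ∀ i, ‖w i‖ < R},
      C * f w ≤ lap (fun v => Real.log (f v)) w) :
    f 0 ≤ 16*m/(C*R^2) := by
  set D : Set (Fin m → ℂ) := {w : Fin m → ℂ | ∀ i, ‖w i‖ < R} with hDdef
  have hm' : (0:ℝ) < m := by exact_mod_cast Nat.lt_of_lt_of_le Nat.zero_lt_one hm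
  have habs_iff : ∀ z : ℂ, ‖z‖ < R ↔ Complex.normSq z < R^2 := by
    intro z
    rw [← Complex.sq_norm]
    constructor
    · intro h; nlinarith [norm_nonneg z]
    · intro h; nlinarith [norm_nonneg z]
  have hzero_mem : (0 : Fin m → ℂ) ∈ D := by
    intro i; simpa using hR
  have hφpos : ∀ w ∈ D, ∀ i, 0 < R^2 - Complex.normSq (w i) := by
    intro w hw i
    have := (habs_iff (w i)).1 (hw i)
    linarith
  have hφleR : ∀ w : Fin m → ℂ, ∀ i : Fin m, R^2 - Complex.normSq (w i) ≤ R^2 := by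
    intro w i
    have := Complex.normSq_nonneg (w i)
    linarith
  have hD_open : IsOpen D := by
    have : D = ⋂ i : Fin m, (fun w : Fin m → ℂ => w i) ⁻¹' {z : ℂ | ‖z‖ < R} := by
      ext w; simp [hDdef, Set.mem_iInter]
    rw [this]
    exact isOpen_iInter_of_finite fun i =>
      (isOpen_lt continuous_norm continuous_const).preimage (continuous_apply i)
  -- the comparison function
  set A : ℝ := 16*m*R^(4*m)/(C*R^2) with hAdef
  have h16m : (0:ℝ) < 16*m := by nlinarith
  have hApos : 0 < A := div_pos (mul_pos h16m (by positivity)) (by positivity)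
  set V : (Fin m → ℂ) → ℝ := fun w => A / ∏ i, (R^2 - Complex.normSq (w i))^2 with hVdef
  set v : (Fin m → ℂ) → ℝ :=
    fun w => Real.log A - 2 * ∑ i, Real.log (R^2 - Complex.normSq (w i)) with hvdef
  set u : (Fin m → ℂ) → ℝ := fun w => Real.log (f w) with hudef
  set g : (Fin m → ℂ) → ℝ := fun w => u w - v w with hgdef
  have hVpos : ∀ w ∈ D, 0 < V w := by
    intro w hw
    apply div_pos hApos
    apply Finset.prod_pos
    intro i _
    have := hφpos w hw i
    positivity
  have hvV : ∀ w ∈ D, v w = Real.log (V w) := by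
    intro w hw
    simp only [hvdef, hVdef]
    rw [Real.log_div (ne_of_gt hApos)
      (ne_of_gt (Finset.prod_pos fun i _ => by have := hφpos w hw i; positivity)),
      Real.log_prod (fun i _ => by have := hφpos w hw i; positivity)]
    simp only [Real.log_pow]
    push_cast
    rw [Finset.mul_sum]
  -- smoothness
  have hu : ContDiffOn ℝ 2 u D := by
    simp only [hudef]
    exact hf.log (fun w hw => ne_of_gt (hpos w hw))
  have hinner : ∀ i : Fin m, ContDiff ℝ 2 (fun w : Fin m → ℂ => R^2 - Complex.normSq (w i)) :=
    fun i => contDiff_const.sub (contDiff_normSq.comp (contDiff_apply ℝ ℂ i))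
  have hv : ContDiffOn ℝ 2 v D := by
    simp only [hvdef]
    apply ContDiffOn.sub contDiffOn_const
    apply ContDiffOn.mul contDiffOn_const
    apply ContDiffOn.sum
    intro i _
    exact ((hinner i).contDiffOn).log (fun w hw => ne_of_gt (hφpos w hw i))
  have hgsm : ContDiffOn ℝ 2 g D := hu.sub hv
  -- bound on u
  have hMpos : 0 < M := lt_of_lt_of_le (hpos 0 hzero_mem) (hM 0 hzero_mem)
  have hu_le : ∀ w ∈ D, u w ≤ Real.log M := fun w hw =>
    (Real.log_le_log_iff (hpos w hw) hMpos).2 (hM w hw)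
  -- the compact exhaustion trick
  set B : ℝ := m * |Real.log (R^2)| with hBdef
  set T : ℝ := Real.log M - g 0 + 1 - Real.log A + 2*B with hTdef
  set δ : ℝ := min (R^2) (Real.exp (-T/2)) with hδdef
  have hδpos : 0 < δ := lt_min (by positivity) (Real.exp_pos _)
  have hδR : δ ≤ R^2 := min_le_left _ _
  set K : Set (Fin m → ℂ) := {w | ∀ i, Complex.normSq (w i) ≤ R^2 - δ} with hKdef
  have hKD : K ⊆ D := by
    intro w hw i
    rw [habs_iff]
    have := hw i
    linarith
  have hK0 : (0 : Fin m → ℂ) ∈ K := by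
    intro i
    simp only [Pi.zero_apply, map_zero]
    linarith
  have hKcomp : IsCompact K := by
    have hKeq : K = Metric.closedBall (0 : Fin m → ℂ) (Real.sqrt (R^2 - δ)) := by
      ext w
      rw [Metric.mem_closedBall, dist_zero_right,
        pi_norm_le_iff_of_nonneg (Real.sqrt_nonneg _)]
      constructor
      · intro h i
        rw [Real.le_sqrt (norm_nonneg _) (by linarith)]
        rw [Complex.sq_norm]
        exact h i
      · intro h i
        have := h i
        rw [Real.le_sqrt (norm_nonneg _) (by linarith),
          Complex.sq_norm] at this
        exact this
    rw [hKeq]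
    exact isCompact_closedBall _ _
  -- outside K, g is small
  have hout : ∀ w ∈ D, w ∉ K → g w < g 0 := by
    intro w hwD hwK
    have hwK' : ∃ i, R^2 - δ < Complex.normSq (w i) := by
      by_contra hcon
      push_neg at hcon
      exact hwK (fun i => hcon i)
    obtain ⟨i, hi⟩ := hwK'
    have hφi : 0 < R^2 - Complex.normSq (w i) := hφpos w hwD i
    have hφiδ : R^2 - Complex.normSq (w i) < δ := by linarith
    have hlogi : Real.log (R^2 - Complex.normSq (w i)) ≤ -T/2 := by
      calc Real.log (R^2 - Complex.normSq (w i)) ≤ Real.log (Real.exp (-T/2)) := by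
            rw [Real.log_le_log_iff hφi (Real.exp_pos _)]
            exact le_trans (le_of_lt hφiδ) (min_le_right _ _)
        _ = -T/2 := Real.log_exp _
    have hsum : ∑ j, Real.log (R^2 - Complex.normSq (w j)) ≤ -T/2 + B := by
      rw [← Finset.add_sum_erase _ _ (Finset.mem_univ i)]
      have hrest : ∑ j ∈ Finset.univ.erase i, Real.log (R^2 - Complex.normSq (w j))
          ≤ ∑ j ∈ Finset.univ.erase i, |Real.log (R^2)| := by
        apply Finset.sum_le_sum
        intro j _
        calc Real.log (R^2 - Complex.normSq (w j)) ≤ Real.log (R^2) := by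
              rw [Real.log_le_log_iff (hφpos w hwD j) (by positivity)]
              exact hφleR w j
          _ ≤ |Real.log (R^2)| := le_abs_self _
      have hcard : ∑ j ∈ Finset.univ.erase i, |Real.log (R^2)|
          = ((Finset.univ.erase i).card : ℝ) * |Real.log (R^2)| := by
        rw [Finset.sum_const, nsmul_eq_mul]
      have hcard_le : ((Finset.univ.erase i).card : ℝ) ≤ (m : ℝ) := by
        have h1 := Finset.card_erase_le (s := (Finset.univ : Finset (Fin m))) (a := i)
        calc ((Finset.univ.erase i).card : ℝ) ≤ ((Finset.univ : Finset (Fin m)).card : ℝ) := by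
              exact_mod_cast h1
          _ = (m : ℝ) := by simp
      have hB : ∑ j ∈ Finset.univ.erase i, |Real.log (R^2)| ≤ B := by
        rw [hcard, hBdef]
        exact mul_le_mul_of_nonneg_right hcard_le (abs_nonneg _)
      linarith
    have hvw : Real.log M - g 0 + 1 ≤ v w := by
      have h3 : v w = Real.log A - 2 * ∑ j : Fin m, Real.log (R^2 - Complex.normSq (w j)) := by
        simp only [hvdef]
      rw [hTdef] at hsum
      rw [h3]
      clear_value T B g u v A V D K δ
      linarith only [hsum]
    have hgw : g w ≤ g 0 - 1 := by
      have h1 := hu_le w hwD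
      have hgw_eq : g w = u w - v w := rfl
      clear_value T B g u v A V D K δ
      linarith only [h1, hvw, hgw_eq]
    linarith
  -- maximum of g
  have hgcont : ContinuousOn g K := (hgsm.continuousOn).mono hKD
  obtain ⟨w₀, hw₀K, hw₀max⟩ := hKcomp.exists_isMaxOn ⟨0, hK0⟩ hgcont
  have hw₀D : w₀ ∈ D := hKD hw₀K
  have hglobal : ∀ w ∈ D, g w ≤ g w₀ := by
    intro w hw
    by_cases hwK : w ∈ K
    · exact hw₀max hwK
    · exact le_trans (le_of_lt (hout w hw hwK)) (hw₀max hK0)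
  have hlocmax : IsLocalMax g w₀ :=
    Filter.eventually_of_mem (hD_open.mem_nhds hw₀D) hglobal

  -- smoothness at the max point
  have hu_at : ContDiffAt ℝ 2 u w₀ := hu.contDiffAt (hD_open.mem_nhds hw₀D)
  have hv_at : ContDiffAt ℝ 2 v w₀ := hv.contDiffAt (hD_open.mem_nhds hw₀D)
  have hg_at : ContDiffAt ℝ 2 g w₀ := hgsm.contDiffAt (hD_open.mem_nhds hw₀D)
  -- directional second derivative bound
  have main_dir : ∀ (i : Fin m) (d : ℂ) (x b : ℝ),
      Complex.normSq (w₀ i) = x^2 + b^2 →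
      (∀ t : ℝ, Complex.normSq (w₀ i + t • d) = (x + t)^2 + b^2) →
      fderiv ℝ (fun vv => fderiv ℝ u vv (Pi.single i d)) w₀ (Pi.single i d)
        ≤ 4/(R^2 - Complex.normSq (w₀ i)) + 8*x^2/(R^2 - Complex.normSq (w₀ i))^2 := by
    intro i d x b hxb hline
    set e : Fin m → ℂ := Pi.single i d with hedef
    have hbridge := bridge u w₀ e hu_at
    have hℓsm : ContDiff ℝ 2 (fun t : ℝ => w₀ + t • e) :=
      contDiff_const.add (contDiff_id.smul contDiff_const)
    have h0 : w₀ + (0:ℝ) • e = w₀ := by simp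
    have hcomp : ∀ F : (Fin m → ℂ) → ℝ, ContDiffAt ℝ 2 F w₀ →
        ContDiffAt ℝ 2 (fun t : ℝ => F (w₀ + t • e)) 0 := by
      intro F hF
      have h1 : ContDiffAt ℝ 2 F ((fun t : ℝ => w₀ + t • e) 0) := by simpa using hF
      simpa [Function.comp_def] using h1.comp 0 hℓsm.contDiffAt
    have hu_line := hcomp u hu_at
    have hv_line := hcomp v hv_at
    have hg_line := hcomp g hg_at
    -- local max along the line
    have hmax_line : IsLocalMax (fun t : ℝ => g (w₀ + t • e)) 0 := by
      have hcont : Filter.Tendsto (fun t : ℝ => w₀ + t • e) (nhds 0) (nhds w₀) := by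
        have h1 := hℓsm.continuous.tendsto (0:ℝ)
        simpa [h0] using h1
      have hev := hcont.eventually hlocmax
      show ∀ᶠ t in nhds (0:ℝ), g (w₀ + t • e) ≤ g (w₀ + (0:ℝ) • e)
      simp only [h0]
      exact hev
    have hgmax2 : deriv (deriv (fun t : ℝ => g (w₀ + t • e))) 0 ≤ 0 :=
      deriv2_nonpos_of_isLocalMax hg_line hmax_line
    -- split u = g + v along the line
    have hdecomp : (fun t : ℝ => u (w₀ + t • e))
        = fun t : ℝ => g (w₀ + t • e) + v (w₀ + t • e) := by
      funext t
      have h1 : g (w₀ + t • e) = u (w₀ + t • e) - v (w₀ + t • e) := rfl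
      rw [h1]; ring
    have hsplit : deriv (deriv (fun t : ℝ => u (w₀ + t • e))) 0
        = deriv (deriv (fun t : ℝ => g (w₀ + t • e))) 0
          + deriv (deriv (fun t : ℝ => v (w₀ + t • e))) 0 := by
      rw [hdecomp]
      exact deriv2_add_of_contDiffAt hg_line hv_line
    -- compute the second derivative of v along the line
    have hφi : 0 < R^2 - Complex.normSq (w₀ i) := hφpos w₀ hw₀D i
    have hφxb : 0 < R^2 - (x^2 + b^2) := by rw [← hxb]; exact hφi
    have hveq : (fun t : ℝ => v (w₀ + t • e)) = fun t : ℝ =>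
        (Real.log A - 2 * ∑ j ∈ Finset.univ.erase i, Real.log (R^2 - Complex.normSq (w₀ j)))
          + (-2 * Real.log (R^2 - ((x + t)^2 + b^2))) := by
      funext t
      simp only [hvdef]
      rw [← Finset.add_sum_erase _
        (fun j => Real.log (R^2 - Complex.normSq ((w₀ + t • e) j))) (Finset.mem_univ i)]
      have h1 : (w₀ + t • e) i = w₀ i + t • d := by
        simp [hedef, Pi.single_eq_same]
      have h2 : ∀ j ∈ Finset.univ.erase i,
          Real.log (R^2 - Complex.normSq ((w₀ + t • e) j))
            = Real.log (R^2 - Complex.normSq (w₀ j)) := by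
        intro j hj
        have hz : (Pi.single i d : Fin m → ℂ) j = 0 := by
          rw [Pi.single_eq_of_ne (Finset.ne_of_mem_erase hj)]
        simp [hedef, hz]
      rw [Finset.sum_congr rfl h2, h1, hline t]
      ring
    have hv2 : deriv (deriv (fun t : ℝ => v (w₀ + t • e))) 0
        = 4/(R^2 - (x^2 + b^2)) + 8*x^2/(R^2 - (x^2 + b^2))^2 := by
      rw [hveq]
      rw [deriv_const_add' (f := fun t : ℝ => -2 * Real.log (R^2 - ((x + t)^2 + b^2)))]
      exact deriv2_log_formula R x b hφxb
    rw [hbridge, hsplit, hv2, hxb]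
    linarith [hgmax2]
  -- summing the bound over all 2m directions
  have hlap_le : lap u w₀ ≤ ∑ i : Fin m,
      (8/(R^2 - Complex.normSq (w₀ i))
        + 8*Complex.normSq (w₀ i)/(R^2 - Complex.normSq (w₀ i))^2) := by
    unfold lap
    apply Finset.sum_le_sum
    intro i _
    have h1 := main_dir i 1 (w₀ i).re (w₀ i).im
      (by rw [Complex.normSq_apply]; ring)
      (fun t => by
        simp only [Complex.normSq_apply, Complex.add_re, Complex.add_im, Complex.real_smul,
          Complex.mul_re, Complex.mul_im, Complex.one_re, Complex.one_im,
          Complex.ofReal_re, Complex.ofReal_im]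
        ring)
    have h2 := main_dir i Complex.I (w₀ i).im (w₀ i).re
      (by rw [Complex.normSq_apply]; ring)
      (fun t => by
        simp only [Complex.normSq_apply, Complex.add_re, Complex.add_im, Complex.real_smul,
          Complex.mul_re, Complex.mul_im, Complex.I_re, Complex.I_im,
          Complex.ofReal_re, Complex.ofReal_im]
        ring)
    have hs : 8*Complex.normSq (w₀ i)/(R^2 - Complex.normSq (w₀ i))^2
        = 8*(w₀ i).re^2/(R^2 - Complex.normSq (w₀ i))^2
          + 8*(w₀ i).im^2/(R^2 - Complex.normSq (w₀ i))^2 := by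
      rw [Complex.normSq_apply]
      ring
    have hφi : 0 < R^2 - Complex.normSq (w₀ i) := hφpos w₀ hw₀D i
    have h4 : 4/(R^2 - Complex.normSq (w₀ i)) + 4/(R^2 - Complex.normSq (w₀ i))
        = 8/(R^2 - Complex.normSq (w₀ i)) := by ring
    rw [hs]
    linarith [h1, h2]
  -- the comparison bound on the sum
  have hsum_le : (∑ i : Fin m,
      (8/(R^2 - Complex.normSq (w₀ i))
        + 8*Complex.normSq (w₀ i)/(R^2 - Complex.normSq (w₀ i))^2)) ≤ C * V w₀ := by
    set P : ℝ := ∏ j : Fin m, (R^2 - Complex.normSq (w₀ j))^2 with hPdef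
    have hPpos : 0 < P := Finset.prod_pos fun j _ => by have := hφpos w₀ hw₀D j; positivity
    have hkey : R^4 * ((R^2)^2)^(m-1) = R^(4*m) := by
      have h1 : ((R:ℝ)^2)^2 = R^4 := by ring
      rw [h1, ← pow_succ', Nat.sub_add_cancel hm, ← pow_mul]
    have hterm : ∀ i : Fin m,
        8/(R^2 - Complex.normSq (w₀ i))
          + 8*Complex.normSq (w₀ i)/(R^2 - Complex.normSq (w₀ i))^2
          ≤ 16*R^(4*m)/(R^2 * P) := by
      intro i
      have hφi : 0 < R^2 - Complex.normSq (w₀ i) := hφpos w₀ hw₀D i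
      have hsi : 0 ≤ Complex.normSq (w₀ i) := Complex.normSq_nonneg _
      have hsiR : Complex.normSq (w₀ i) < R^2 := (habs_iff _).1 (hw₀D i)
      have e1 : 8/(R^2 - Complex.normSq (w₀ i))
          + 8*Complex.normSq (w₀ i)/(R^2 - Complex.normSq (w₀ i))^2
          = (8*(R^2 - Complex.normSq (w₀ i)) + 8*Complex.normSq (w₀ i))
            /(R^2 - Complex.normSq (w₀ i))^2 := by
        field_simp
      have e2 : (8*(R^2 - Complex.normSq (w₀ i)) + 8*Complex.normSq (w₀ i))
            /(R^2 - Complex.normSq (w₀ i))^2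
          ≤ 16*R^2/(R^2 - Complex.normSq (w₀ i))^2 :=
        div_le_div_of_nonneg_right (by nlinarith) (by positivity)
      have e3 : 16*R^2/(R^2 - Complex.normSq (w₀ i))^2 ≤ 16*R^(4*m)/(R^2 * P) := by
        rw [div_le_div_iff₀ (by positivity) (by positivity)]
        have hP : P = (R^2 - Complex.normSq (w₀ i))^2
            * ∏ j ∈ Finset.univ.erase i, (R^2 - Complex.normSq (w₀ j))^2 :=
          (Finset.mul_prod_erase _ _ (Finset.mem_univ i)).symm
        have hQ : (∏ j ∈ Finset.univ.erase i, (R^2 - Complex.normSq (w₀ j))^2)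
            ≤ ((R^2)^2)^(m-1) := by
          have h1 : (∏ j ∈ Finset.univ.erase i, (R^2 - Complex.normSq (w₀ j))^2)
              ≤ ∏ _j ∈ Finset.univ.erase i, ((R:ℝ)^2)^2 := by
            apply Finset.prod_le_prod
            · intro j _; positivity
            · intro j _
              exact pow_le_pow_left₀ (le_of_lt (hφpos w₀ hw₀D j)) (hφleR w₀ j) 2
          have h2 : (∏ _j ∈ Finset.univ.erase i, ((R:ℝ)^2)^2) = ((R^2)^2)^(m-1) := by
            rw [Finset.prod_const, Finset.card_erase_of_mem (Finset.mem_univ i),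
              Finset.card_univ, Fintype.card_fin]
          rw [h2] at h1
          exact h1
        have hQ0 : 0 ≤ (∏ j ∈ Finset.univ.erase i, (R^2 - Complex.normSq (w₀ j))^2) := by
          apply Finset.prod_nonneg
          intro j _; positivity
        calc 16*R^2*(R^2*P)
            = 16*(R^4 * ∏ j ∈ Finset.univ.erase i, (R^2 - Complex.normSq (w₀ j))^2)
              * (R^2 - Complex.normSq (w₀ i))^2 := by rw [hP]; ring
          _ ≤ 16*(R^4 * ((R^2)^2)^(m-1)) * (R^2 - Complex.normSq (w₀ i))^2 := by
              gcongr
          _ = 16*R^(4*m) * (R^2 - Complex.normSq (w₀ i))^2 := by rw [hkey]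
      calc 8/(R^2 - Complex.normSq (w₀ i))
          + 8*Complex.normSq (w₀ i)/(R^2 - Complex.normSq (w₀ i))^2
          = (8*(R^2 - Complex.normSq (w₀ i)) + 8*Complex.normSq (w₀ i))
            /(R^2 - Complex.normSq (w₀ i))^2 := e1
        _ ≤ 16*R^2/(R^2 - Complex.normSq (w₀ i))^2 := e2
        _ ≤ 16*R^(4*m)/(R^2 * P) := e3
    calc (∑ i : Fin m,
        (8/(R^2 - Complex.normSq (w₀ i))
          + 8*Complex.normSq (w₀ i)/(R^2 - Complex.normSq (w₀ i))^2))
        ≤ ∑ _i : Fin m, 16*R^(4*m)/(R^2 * P) := Finset.sum_le_sum fun i _ => hterm i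
      _ = m * (16*R^(4*m)/(R^2 * P)) := by
          rw [Finset.sum_const, Finset.card_univ, Fintype.card_fin, nsmul_eq_mul]
      _ = C * V w₀ := by
          have hVw : V w₀ = A / P := rfl
          rw [hVw, hAdef]
          field_simp
  -- conclusion
  have hlapu := hlap w₀ hw₀D
  have hfw₀ : f w₀ ≤ V w₀ := by
    have h1 : C * f w₀ ≤ C * V w₀ := le_trans hlapu (le_trans hlap_le hsum_le)
    exact le_of_mul_le_mul_left h1 hC
  have huvw₀ : g w₀ ≤ 0 := by
    have h1 : u w₀ ≤ v w₀ := by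
      have h2 : Real.log (f w₀) ≤ Real.log (V w₀) :=
        (Real.log_le_log_iff (hpos w₀ hw₀D) (hVpos w₀ hw₀D)).2 hfw₀
      have h3 : u w₀ = Real.log (f w₀) := rfl
      rw [h3, hvV w₀ hw₀D]
      exact h2
    have h4 : g w₀ = u w₀ - v w₀ := rfl
    rw [h4]
    linarith
  have hg0 : g 0 ≤ 0 := le_trans (hglobal 0 hzero_mem) huvw₀
  have hu0v0 : u 0 ≤ v 0 := by
    have h4 : g 0 = u 0 - v 0 := rfl
    rw [h4] at hg0
    linarith
  have hf0 : f 0 ≤ V 0 := by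
    have h1 : Real.log (f 0) ≤ Real.log (V 0) := by
      have h3 : u 0 = Real.log (f 0) := rfl
      rw [← h3, ← hvV 0 hzero_mem]
      exact hu0v0
    exact (Real.log_le_log_iff (hpos 0 hzero_mem) (hVpos 0 hzero_mem)).1 h1
  have hV0 : V 0 = 16*m/(C*R^2) := by
    have hprod : (∏ i : Fin m, (R^2 - Complex.normSq ((0 : Fin m → ℂ) i))^2) = R^(4*m) := by
      simp only [Pi.zero_apply, map_zero, sub_zero]
      rw [Finset.prod_const, Finset.card_univ, Fintype.card_fin, ← pow_mul, ← pow_mul]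
      congr 1
      ring
    have hV0' : V 0 = A / (R^(4*m)) := by
      have : V 0 = A / (∏ i : Fin m, (R^2 - Complex.normSq ((0 : Fin m → ℂ) i))^2) := rfl
      rw [this, hprod]
    rw [hV0', hAdef]
    have hRm : (R:ℝ)^(4*m) ≠ 0 := pow_ne_zero _ (ne_of_gt hR)
    field_simp
  rw [hV0] at hf0
  exact hf0

/-- There is no sequence `(f_k)_{k ≥ 1}` of positive, bounded, twice continuously
differentiable functions on the polydiscs `D_k = {w ∈ ℂ^m : ∀ i, |w_i| < δ₀ k}` satisfying
`Δ(log f_k) ≥ C f_k` on `D_k` and `f_k(0) = c > 0`. -/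
theorem stmt5 (δ₀ C c : ℝ) (hδ₀ : 0 < δ₀) (hC : 0 < C) (hc : 0 < c) (m : ℕ) (hm : 1 ≤ m) :
    ¬ ∃ f : ℕ → (Fin m → ℂ) → ℝ,
      ∀ k : ℕ, 1 ≤ k →
        (∀ w ∈ {w : Fin m → ℂ | ∀ i, ‖w i‖ < δ₀ * k}, 0 < f k w) ∧
        (∃ M : ℝ, ∀ w ∈ {w : Fin m → ℂ | ∀ i, ‖w i‖ < δ₀ * k}, f k w ≤ M) ∧
        ContDiffOn ℝ 2 (f k) {w : Fin m → ℂ | ∀ i, ‖w i‖ < δ₀ * k} ∧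
        (∀ w ∈ {w : Fin m → ℂ | ∀ i, ‖w i‖ < δ₀ * k},
          C * f k w ≤ lap (fun v => Real.log (f k v)) w) ∧
        f k 0 = c := by
  rintro ⟨f, hf⟩
  set x : ℝ := 16*m/(C*δ₀^2*c) with hxdef
  set k : ℕ := ⌈x⌉₊ + 1 with hkdef
  have hk1 : 1 ≤ k := Nat.le_add_left 1 _
  have hkpos : (0:ℝ) < k := Nat.cast_pos.mpr hk1
  obtain ⟨h1, ⟨M, h2⟩, h3, h4, h5⟩ := hf k hk1
  have hR : (0:ℝ) < δ₀ * k := by positivity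
  have hkey := key (δ₀*k) C M hR hC m hm (f k) h1 h2 h3 h4
  rw [h5] at hkey
  -- now derive the contradiction
  have hkx : x < (k:ℝ) := by
    calc x ≤ (⌈x⌉₊ : ℝ) := Nat.le_ceil x
      _ < (k:ℝ) := by exact_mod_cast Nat.lt_succ_self _
  have hk1' : (1:ℝ) ≤ (k:ℝ) := by exact_mod_cast hk1
  have hkk : (k:ℝ) ≤ (k:ℝ)^2 := by nlinarith
  have hx2 : x < (k:ℝ)^2 := lt_of_lt_of_le hkx hkk
  have h6 : 16*(m:ℝ) < C*δ₀^2*c*(k:ℝ)^2 := by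
    have h7 := (div_lt_iff₀ (show (0:ℝ) < C*δ₀^2*c by positivity)).1 hx2
    nlinarith [h7]
  have h8 : 16*(m:ℝ)/(C*(δ₀*(k:ℝ))^2) < c := by
    rw [div_lt_iff₀ (by positivity)]
    nlinarith [h6]
  linarith [hkey, h8]
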